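/- Let N ∈ {2,3}, α = 4 − N, m₁, m₂ > 0, and ω ∈ ℝ with ω² < min{m₁², m₂²/4}. Let 𝛗_ω be a ground-state pair. If 𝐮 is an admissible pair, not identically zero, with P_ω(𝐮) = 0, then J_ω(𝛗_ω) ≤ J_ω(𝐮). -/

import Mathlib

set_option maxHeartbeats 1000000


open MeasureTheory Complex

noncomputable section

/-- The spatial domain `ℝ^N`. -/
abbrev Sp (N : ℕ) := EuclideanSpace ℝ (Fin N)

/-- Square of the `L²` norm: `‖u‖_{L²}²`. -/
def nsq {N : ℕ} (u : Sp N → ℂ) : ℝ := ∫ x, ‖u x‖ ^ 2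

/-- Square of the `L²` norm of the gradient: `‖∇u‖_{L²}²`. -/
def gsq {N : ℕ} (u : Sp N → ℂ) : ℝ := ∫ x, ‖fderiv ℝ u x‖ ^ 2

/-- An admissible pair: differentiable components, with `u_j`, `|∇u_j|`
square-integrable and `|u₁|²|u₂|` integrable. -/
def Admissible {N : ℕ} (u : (Sp N → ℂ) × (Sp N → ℂ)) : Prop :=
  Differentiable ℝ u.1 ∧ Differentiable ℝ u.2 ∧
  MemLp u.1 2 volume ∧ MemLp u.2 2 volume ∧
  Integrable (fun x => ‖fderiv ℝ u.1 x‖ ^ 2) ∧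
  Integrable (fun x => ‖fderiv ℝ u.2 x‖ ^ 2) ∧
  Integrable (fun x => ‖u.1 x‖ ^ 2 * ‖u.2 x‖)

/-- A pair of square-integrable functions. -/
def SqInt {N : ℕ} (v : (Sp N → ℂ) × (Sp N → ℂ)) : Prop :=
  MemLp v.1 2 volume ∧ MemLp v.2 2 volume

/-- The interaction term `G(𝐮) = Re ∫ u₁² conj u₂`. -/
def Gfun {N : ℕ} (u : (Sp N → ℂ) × (Sp N → ℂ)) : ℝ :=
  (∫ x, (u.1 x) ^ 2 * starRingEnd ℂ (u.2 x)).re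

/-- `L(𝐮) = -(1/2)(‖∇u₁‖² + ‖∇u₂‖²) + G(𝐮)`. -/
def Lfun {N : ℕ} (u : (Sp N → ℂ) × (Sp N → ℂ)) : ℝ :=
  -(1/2) * (gsq u.1 + gsq u.2) + Gfun u

/-- `M(𝐮) = (1/2)(m₁²‖u₁‖² + m₂²‖u₂‖²)`. -/
def Mfun {N : ℕ} (m₁ m₂ : ℝ) (u : (Sp N → ℂ) × (Sp N → ℂ)) : ℝ :=
  (1/2) * (m₁ ^ 2 * nsq u.1 + m₂ ^ 2 * nsq u.2)

/-- `M_ω(𝐮) = ((m₁²-ω²)/2)‖u₁‖² + ((m₂²-4ω²)/2)‖u₂‖²`. -/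
def Mom {N : ℕ} (m₁ m₂ ω : ℝ) (u : (Sp N → ℂ) × (Sp N → ℂ)) : ℝ :=
  (m₁ ^ 2 - ω ^ 2) / 2 * nsq u.1 + (m₂ ^ 2 - 4 * ω ^ 2) / 2 * nsq u.2

/-- `J_ω(𝐮) = M_ω(𝐮) - L(𝐮)`. -/
def Jom {N : ℕ} (m₁ m₂ ω : ℝ) (u : (Sp N → ℂ) × (Sp N → ℂ)) : ℝ :=
  Mom m₁ m₂ ω u - Lfun u

/-- The Nehari functional `K_ω(𝐮)`. -/
def Kom {N : ℕ} (m₁ m₂ ω : ℝ) (u : (Sp N → ℂ) × (Sp N → ℂ)) : ℝ :=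
  2 * Mom m₁ m₂ ω u + gsq u.1 + gsq u.2 - 3 * Gfun u

/-- `P_ω(𝐮) = α M_ω(𝐮) - (α+2) L(𝐮)` with `α = 4 - N`. -/
def Pom {N : ℕ} (m₁ m₂ ω : ℝ) (u : (Sp N → ℂ) × (Sp N → ℂ)) : ℝ :=
  (4 - (N : ℝ)) * Mom m₁ m₂ ω u - ((4 - (N : ℝ)) + 2) * Lfun u

/-- `K(𝐯) = (1/2)(‖v₁‖² + ‖v₂‖²)`. -/
def Kfun {N : ℕ} (v : (Sp N → ℂ) × (Sp N → ℂ)) : ℝ :=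
  (1/2) * (nsq v.1 + nsq v.2)

/-- The energy `E(𝐮,𝐯) = K(𝐯) + M(𝐮) - L(𝐮)`. -/
def Efun {N : ℕ} (m₁ m₂ : ℝ) (u v : (Sp N → ℂ) × (Sp N → ℂ)) : ℝ :=
  Kfun v + Mfun m₁ m₂ u - Lfun u

/-- The charge `Q(𝐮,𝐯) = (v₁, i u₁)_{L²} + 2 (v₂, i u₂)_{L²}`. -/
def Qfun {N : ℕ} (u v : (Sp N → ℂ) × (Sp N → ℂ)) : ℝ :=
  (∫ x, v.1 x * starRingEnd ℂ (Complex.I * u.1 x)).re +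
    2 * (∫ x, v.2 x * starRingEnd ℂ (Complex.I * u.2 x)).re

/-- `H(𝐮,𝐯) = -α K(𝐯) + α M(𝐮) - (α+2) L(𝐮)` with `α = 4 - N`. -/
def Hfun {N : ℕ} (m₁ m₂ : ℝ) (u v : (Sp N → ℂ) × (Sp N → ℂ)) : ℝ :=
  -(4 - (N : ℝ)) * Kfun v + (4 - (N : ℝ)) * Mfun m₁ m₂ u - ((4 - (N : ℝ)) + 2) * Lfun u

/-- A ground-state pair: admissible, nonzero, `P_ω = 0`, and `J_ω` attains the
infimum of `J_ω` over nonzero admissible pairs on the Nehari manifold `K_ω = 0`. -/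
def IsGroundState {N : ℕ} (m₁ m₂ ω : ℝ) (φ : (Sp N → ℂ) × (Sp N → ℂ)) : Prop :=
  Admissible φ ∧ φ ≠ 0 ∧ Pom m₁ m₂ ω φ = 0 ∧
  Jom m₁ m₂ ω φ =
    sInf {r : ℝ | ∃ w : (Sp N → ℂ) × (Sp N → ℂ),
      Admissible w ∧ w ≠ 0 ∧ Kom m₁ m₂ ω w = 0 ∧ r = Jom m₁ m₂ ω w}

/-- `𝛙_ω = (iωφ₁, 2iωφ₂)`. -/
def psiOf {N : ℕ} (ω : ℝ) (φ : (Sp N → ℂ) × (Sp N → ℂ)) : (Sp N → ℂ) × (Sp N → ℂ) :=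
  (fun x => Complex.I * (ω : ℂ) * φ.1 x, fun x => 2 * (Complex.I * (ω : ℂ)) * φ.2 x)

/-- The scaling `u^λ(x) = λ² u(λx)`, componentwise. -/
def uscale {N : ℕ} (lam : ℝ) (u : (Sp N → ℂ) × (Sp N → ℂ)) : (Sp N → ℂ) × (Sp N → ℂ) :=
  (fun x => ((lam : ℂ)) ^ 2 * u.1 (lam • x), fun x => ((lam : ℂ)) ^ 2 * u.2 (lam • x))

/-- The scaling `v_λ(x) = λ^{N-2} v(λx)`, componentwise. -/
def vscale {N : ℕ} (lam : ℝ) (v : (Sp N → ℂ) × (Sp N → ℂ)) : (Sp N → ℂ) × (Sp N → ℂ) :=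
  (fun x => ((lam ^ ((N : ℝ) - 2) : ℝ) : ℂ) * v.1 (lam • x),
   fun x => ((lam ^ ((N : ℝ) - 2) : ℝ) : ℂ) * v.2 (lam • x))


section Helpers

variable {N : ℕ}

lemma int_comp {F : Type*} [NormedAddCommGroup F] [NormedSpace ℝ F]
    (f : Sp N → F) {lam : ℝ} (h : 0 < lam) :
    ∫ x, f (lam • x) = ((lam ^ N)⁻¹ : ℝ) • ∫ x, f x := by
  rw [MeasureTheory.Measure.integral_comp_smul_of_nonneg volume f lam (hR := h.le),
    finrank_euclideanSpace_fin]

lemma int_comp_real (f : Sp N → ℝ) {lam : ℝ} (h : 0 < lam) :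
    ∫ x, f (lam • x) = ((lam ^ N)⁻¹ : ℝ) * ∫ x, f x := by
  rw [int_comp f h, smul_eq_mul]

lemma fderiv_scale {u : Sp N → ℂ} (hu : Differentiable ℝ u) (c : ℂ) (lam : ℝ)
    (x : Sp N) :
    fderiv ℝ (fun x => c * u (lam • x)) x = c • (lam • fderiv ℝ u (lam • x)) := by
  have h1 : HasFDerivAt (fun x : Sp N => lam • x)
      (lam • ContinuousLinearMap.id ℝ (Sp N)) x := by
    exact ((ContinuousLinearMap.id ℝ (Sp N)).hasFDerivAt (x := x)).const_smul lam
  have h2 : HasFDerivAt (fun x => u (lam • x))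
      ((fderiv ℝ u (lam • x)).comp (lam • ContinuousLinearMap.id ℝ (Sp N))) x :=
    (hu (lam • x)).hasFDerivAt.comp x h1
  have h3 := h2.const_mul c
  have h4 : (fderiv ℝ u (lam • x)).comp (lam • ContinuousLinearMap.id ℝ (Sp N))
      = lam • fderiv ℝ u (lam • x) := by
    ext y; simp
  rw [h4] at h3
  exact h3.fderiv

lemma norm_sq_fderiv_scale {u : Sp N → ℂ} (hu : Differentiable ℝ u) (c : ℂ) {lam : ℝ}
    (h : 0 < lam) (x : Sp N) :
    ‖fderiv ℝ (fun x => c * u (lam • x)) x‖ ^ 2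
      = (‖c‖ ^ 2 * lam ^ 2) * ((fun y => ‖fderiv ℝ u y‖ ^ 2) (lam • x)) := by
  rw [fderiv_scale hu c lam x, norm_smul c (lam • fderiv ℝ u (lam • x)),
    norm_smul lam (fderiv ℝ u (lam • x)), Real.norm_eq_abs, abs_of_pos h]
  ring

lemma nsq_scale (u : Sp N → ℂ) (c : ℂ) {lam : ℝ} (h : 0 < lam) :
    nsq (fun x => c * u (lam • x)) = ‖c‖ ^ 2 * ((lam ^ N)⁻¹ * nsq u) := by
  unfold nsq
  have h1 : ∀ x : Sp N, ‖c * u (lam • x)‖ ^ 2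
      = ‖c‖ ^ 2 * ((fun y => ‖u y‖ ^ 2) (lam • x)) := by
    intro x; simp [norm_mul, mul_pow]
  simp_rw [h1]
  rw [MeasureTheory.integral_const_mul, int_comp_real (fun y => ‖u y‖ ^ 2) h]

lemma gsq_scale {u : Sp N → ℂ} (hu : Differentiable ℝ u) (c : ℂ) {lam : ℝ} (h : 0 < lam) :
    gsq (fun x => c * u (lam • x)) = ‖c‖ ^ 2 * (lam ^ 2 * ((lam ^ N)⁻¹ * gsq u)) := by
  unfold gsq
  simp_rw [norm_sq_fderiv_scale hu c h]
  rw [MeasureTheory.integral_const_mul, int_comp_real (fun y => ‖fderiv ℝ u y‖ ^ 2) h]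
  ring

lemma G_scale_aux {N : ℕ} (f : Sp N → ℂ) (c : ℝ) {lam : ℝ} (h : 0 < lam) :
    (∫ x, (c : ℂ) * f (lam • x)).re = c * ((lam ^ N)⁻¹ * (∫ x, f x).re) := by
  rw [MeasureTheory.integral_const_mul, int_comp f h]
  have h2 : (c : ℂ) * ((lam ^ N)⁻¹ • ∫ x, f x) = ((c * (lam ^ N)⁻¹ : ℝ) : ℂ) * ∫ x, f x := by
    push_cast [Complex.real_smul]; ring
  rw [h2, Complex.re_ofReal_mul]; ring

lemma G_scale (u : (Sp N → ℂ) × (Sp N → ℂ)) {lam : ℝ} (h : 0 < lam) :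
    Gfun (uscale lam u) = lam ^ 6 * ((lam ^ N)⁻¹ * Gfun u) := by
  unfold Gfun uscale
  have h1 : ∀ x : Sp N,
      ((lam : ℂ) ^ 2 * u.1 (lam • x)) ^ 2 * starRingEnd ℂ ((lam : ℂ) ^ 2 * u.2 (lam • x))
      = ((lam ^ 6 : ℝ) : ℂ) * ((fun y => u.1 y ^ 2 * starRingEnd ℂ (u.2 y)) (lam • x)) := by
    intro x
    simp only [map_mul, map_pow, Complex.conj_ofReal]
    push_cast
    ring
  simp_rw [h1]
  exact G_scale_aux (fun y => u.1 y ^ 2 * starRingEnd ℂ (u.2 y)) (lam ^ 6) h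

lemma nsq_nonneg (f : Sp N → ℂ) : 0 ≤ nsq f :=
  MeasureTheory.integral_nonneg fun x => sq_nonneg _

lemma gsq_nonneg (f : Sp N → ℂ) : 0 ≤ gsq f :=
  MeasureTheory.integral_nonneg fun x => sq_nonneg _

lemma nsq_zero : nsq (fun _ : Sp N => (0 : ℂ)) = 0 := by
  simp [nsq]

lemma eq_zero_of_nsq_eq_zero {f : Sp N → ℂ} (hc : Continuous f) (hf : MemLp f 2 volume)
    (h0 : nsq f = 0) : f = 0 := by
  have hi : Integrable (fun x => ‖f x‖ ^ 2) volume :=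
    (memLp_two_iff_integrable_sq_norm hf.aestronglyMeasurable).mp hf
  have h1 := (MeasureTheory.integral_eq_zero_iff_of_nonneg
    (fun x => sq_nonneg ‖f x‖) hi).mp h0
  have hae : f =ᵐ[volume] 0 := by
    filter_upwards [h1] with x hx
    have hx' : ‖f x‖ ^ 2 = 0 := hx
    have : ‖f x‖ = 0 := by nlinarith [norm_nonneg (f x)]
    simpa using this
  exact (Continuous.ae_eq_iff_eq volume hc continuous_const).mp hae

end Helpers


/-- Variational characterization of ground states in terms of `P_ω`:
if `P_ω(𝐮) = 0` and `𝐮 ≠ 0`, then `J_ω(𝛗_ω) ≤ J_ω(𝐮)`. -/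
theorem stmt_5 {N : ℕ} (hN : N = 2 ∨ N = 3) (m₁ m₂ ω : ℝ)
    (hm₁ : 0 < m₁) (hm₂ : 0 < m₂) (hω : ω ^ 2 < min (m₁ ^ 2) (m₂ ^ 2 / 4))
    (φ : (Sp N → ℂ) × (Sp N → ℂ)) (hφ : IsGroundState m₁ m₂ ω φ)
    (u : (Sp N → ℂ) × (Sp N → ℂ)) (hu : Admissible u) (hne : u ≠ 0)
    (hP : Pom m₁ m₂ ω u = 0) :
    Jom m₁ m₂ ω φ ≤ Jom m₁ m₂ ω u := by
  obtain ⟨hφa, hφne, hφP, hφJ⟩ := hφ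
  obtain ⟨hd1, hd2, hm1, hm2, hg1, hg2, hint⟩ := hu
  have hω1 : ω ^ 2 < m₁ ^ 2 := lt_of_lt_of_le hω (min_le_left _ _)
  have hω2 : ω ^ 2 < m₂ ^ 2 / 4 := lt_of_lt_of_le hω (min_le_right _ _)
  have hc1 : (0 : ℝ) < (m₁ ^ 2 - ω ^ 2) / 2 := by linarith
  have hc2 : (0 : ℝ) < (m₂ ^ 2 - 4 * ω ^ 2) / 2 := by linarith
  -- Mom is positive
  have hMnn : 0 ≤ Mom m₁ m₂ ω u := by
    unfold Mom
    nlinarith only [nsq_nonneg u.1, nsq_nonneg u.2, hc1, hc2]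
  have hMpos : 0 < Mom m₁ m₂ ω u := by
    rcases hMnn.lt_or_eq with h | h
    · exact h
    · exfalso
      have hMeq : Mom m₁ m₂ ω u = 0 := h.symm
      unfold Mom at hMeq
      have hn1 : nsq u.1 = 0 := le_antisymm
        (by nlinarith only [hMeq, mul_nonneg hc2.le (nsq_nonneg u.2), hc1, nsq_nonneg u.1])
        (nsq_nonneg u.1)
      have hn2 : nsq u.2 = 0 := le_antisymm
        (by nlinarith only [hMeq, mul_nonneg hc1.le (nsq_nonneg u.1), hc2, nsq_nonneg u.2])
        (nsq_nonneg u.2)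
      have h1 : u.1 = 0 := eq_zero_of_nsq_eq_zero hd1.continuous hm1 hn1
      have h2 : u.2 = 0 := eq_zero_of_nsq_eq_zero hd2.continuous hm2 hn2
      exact hne (Prod.ext h1 h2)
  set M : ℝ := Mom m₁ m₂ ω u with hMdef
  set a : ℝ := gsq u.1 + gsq u.2 with hadef
  set G : ℝ := Gfun u with hGdef
  have hann : 0 ≤ a := add_nonneg (gsq_nonneg _) (gsq_nonneg _)
  -- unfold P
  have hP' : (4 - (N : ℝ)) * M + ((4 - (N : ℝ)) + 2) * (a / 2 - G) = 0 := by
    have : Pom m₁ m₂ ω u = (4 - (N : ℝ)) * M - ((4 - (N : ℝ)) + 2) * (-(1/2) * a + G) := by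
      unfold Pom Lfun; rw [hMdef, hGdef, hadef]
    rw [this] at hP; linarith
  clear_value M a G
  have hα1 : (1 : ℝ) ≤ 4 - (N : ℝ) := by rcases hN with h | h <;> rw [h] <;> norm_num
  have hα2 : (4 - (N : ℝ)) ≤ 2 := by rcases hN with h | h <;> rw [h] <;> norm_num
  have h3Ga : 0 < 3 * G - a := by
    have hA : (0:ℝ) < (4 - (N : ℝ)) + 2 := by linarith only [hα1]
    have hαM : 0 < (4 - (N : ℝ)) * M := mul_pos (by linarith only [hα1]) hMpos
    have key : ((4 - (N : ℝ)) + 2) * (3 * G - a)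
        = 3 * ((4 - (N : ℝ)) * M) + ((4 - (N : ℝ)) + 2) * (a / 2) := by
      linear_combination -3 * hP'
    have h1 : 0 < ((4 - (N : ℝ)) + 2) * (3 * G - a) := by
      rw [key]
      nlinarith only [hαM, mul_nonneg hA.le hann]
    by_contra hcon
    push_neg at hcon
    nlinarith only [h1, hcon, hA]
  set lam : ℝ := Real.sqrt (2 * M / (3 * G - a)) with hlamdef
  have hq : 0 < 2 * M / (3 * G - a) := div_pos (by linarith only [hMpos]) h3Ga
  have hlam : 0 < lam := Real.sqrt_pos.mpr hq
  have hlamsq : lam ^ 2 = 2 * M / (3 * G - a) := Real.sq_sqrt hq.le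
  have hlam2 : lam ^ 2 * (3 * G - a) = 2 * M := by
    rw [hlamsq]; field_simp
  have hcinv : (0 : ℝ) < (lam ^ N)⁻¹ := inv_pos.mpr (pow_pos hlam N)
  clear_value lam
  have hnorm : ‖((lam : ℂ)) ^ 2‖ ^ 2 = lam ^ 4 := by
    rw [norm_pow, Complex.norm_real, Real.norm_eq_abs, abs_of_pos hlam]; ring
  set w := uscale lam u with hwdef
  -- scaling identities
  have hnw1 : nsq w.1 = lam ^ 4 * ((lam ^ N)⁻¹ * nsq u.1) := by
    rw [hwdef]; show nsq (fun x => ((lam : ℂ)) ^ 2 * u.1 (lam • x)) = _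
    rw [nsq_scale u.1 _ hlam, hnorm]
  have hnw2 : nsq w.2 = lam ^ 4 * ((lam ^ N)⁻¹ * nsq u.2) := by
    rw [hwdef]; show nsq (fun x => ((lam : ℂ)) ^ 2 * u.2 (lam • x)) = _
    rw [nsq_scale u.2 _ hlam, hnorm]
  have hgw1 : gsq w.1 = lam ^ 6 * ((lam ^ N)⁻¹ * gsq u.1) := by
    rw [hwdef]; show gsq (fun x => ((lam : ℂ)) ^ 2 * u.1 (lam • x)) = _
    rw [gsq_scale hd1 _ hlam, hnorm]; ring
  have hgw2 : gsq w.2 = lam ^ 6 * ((lam ^ N)⁻¹ * gsq u.2) := by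
    rw [hwdef]; show gsq (fun x => ((lam : ℂ)) ^ 2 * u.2 (lam • x)) = _
    rw [gsq_scale hd2 _ hlam, hnorm]; ring
  have hGw : Gfun w = lam ^ 6 * ((lam ^ N)⁻¹ * G) := by
    rw [hwdef, G_scale u hlam, hGdef]
  have hMw : Mom m₁ m₂ ω w = lam ^ 4 * ((lam ^ N)⁻¹ * M) := by
    unfold Mom
    rw [hnw1, hnw2, hMdef]; unfold Mom; ring
  -- admissibility of w
  have hsm : Differentiable ℝ (fun x : Sp N => lam • x) := differentiable_id.const_smul lam
  have hwd1 : Differentiable ℝ w.1 := (hd1.comp hsm).const_mul _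
  have hwd2 : Differentiable ℝ w.2 := (hd2.comp hsm).const_mul _
  have hlamne : lam ≠ 0 := ne_of_gt hlam
  have hiu1 : Integrable (fun x : Sp N => ‖u.1 x‖ ^ 2) volume :=
    (memLp_two_iff_integrable_sq_norm hd1.continuous.aestronglyMeasurable).mp hm1
  have hiu2 : Integrable (fun x : Sp N => ‖u.2 x‖ ^ 2) volume :=
    (memLp_two_iff_integrable_sq_norm hd2.continuous.aestronglyMeasurable).mp hm2
  have hadmw : Admissible w := by
    refine ⟨hwd1, hwd2, ?_, ?_, ?_, ?_, ?_⟩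
    · refine (memLp_two_iff_integrable_sq_norm hwd1.continuous.aestronglyMeasurable).mpr ?_
      have heq : (fun x : Sp N => ‖w.1 x‖ ^ 2)
          = fun x => ‖((lam : ℂ)) ^ 2‖ ^ 2 * ((fun y => ‖u.1 y‖ ^ 2) (lam • x)) := by
        funext x; show ‖((lam : ℂ)) ^ 2 * u.1 (lam • x)‖ ^ 2 = _
        simp [norm_mul, mul_pow]
      rw [heq]; exact (hiu1.comp_smul hlamne).const_mul _
    · refine (memLp_two_iff_integrable_sq_norm hwd2.continuous.aestronglyMeasurable).mpr ?_
      have heq : (fun x : Sp N => ‖w.2 x‖ ^ 2)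
          = fun x => ‖((lam : ℂ)) ^ 2‖ ^ 2 * ((fun y => ‖u.2 y‖ ^ 2) (lam • x)) := by
        funext x; show ‖((lam : ℂ)) ^ 2 * u.2 (lam • x)‖ ^ 2 = _
        simp [norm_mul, mul_pow]
      rw [heq]; exact (hiu2.comp_smul hlamne).const_mul _
    · have heq : (fun x : Sp N => ‖fderiv ℝ w.1 x‖ ^ 2)
          = fun x => (‖((lam : ℂ)) ^ 2‖ ^ 2 * lam ^ 2) *
              ((fun y => ‖fderiv ℝ u.1 y‖ ^ 2) (lam • x)) := by
        funext x
        show ‖fderiv ℝ (fun x => ((lam : ℂ)) ^ 2 * u.1 (lam • x)) x‖ ^ 2 = _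
        exact norm_sq_fderiv_scale hd1 _ hlam x
      rw [heq]; exact (hg1.comp_smul hlamne).const_mul _
    · have heq : (fun x : Sp N => ‖fderiv ℝ w.2 x‖ ^ 2)
          = fun x => (‖((lam : ℂ)) ^ 2‖ ^ 2 * lam ^ 2) *
              ((fun y => ‖fderiv ℝ u.2 y‖ ^ 2) (lam • x)) := by
        funext x
        show ‖fderiv ℝ (fun x => ((lam : ℂ)) ^ 2 * u.2 (lam • x)) x‖ ^ 2 = _
        exact norm_sq_fderiv_scale hd2 _ hlam x
      rw [heq]; exact (hg2.comp_smul hlamne).const_mul _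
    · have heq : (fun x : Sp N => ‖w.1 x‖ ^ 2 * ‖w.2 x‖)
          = fun x => (‖((lam : ℂ)) ^ 2‖ ^ 2 * ‖((lam : ℂ)) ^ 2‖) *
              ((fun y => ‖u.1 y‖ ^ 2 * ‖u.2 y‖) (lam • x)) := by
        funext x
        show ‖((lam : ℂ)) ^ 2 * u.1 (lam • x)‖ ^ 2 * ‖((lam : ℂ)) ^ 2 * u.2 (lam • x)‖ = _
        simp [norm_mul, mul_pow]; ring
      rw [heq]; exact (hint.comp_smul hlamne).const_mul _
  -- w is nonzero
  have hMwpos : 0 < Mom m₁ m₂ ω w := by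
    rw [hMw]; exact mul_pos (pow_pos hlam 4) (mul_pos hcinv hMpos)
  have hwne : w ≠ 0 := by
    intro h0
    rw [h0] at hMwpos
    have hz : Mom m₁ m₂ ω (0 : (Sp N → ℂ) × (Sp N → ℂ)) = 0 := by
      unfold Mom nsq; simp
    rw [hz] at hMwpos
    exact lt_irrefl 0 hMwpos
  -- K(w) = 0
  have hKw : Kom m₁ m₂ ω w = 0 := by
    unfold Kom
    rw [hMw, hgw1, hgw2]
    have hGw' : Gfun w = lam ^ 6 * ((lam ^ N)⁻¹ * G) := hGw
    rw [hGw']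
    have haG : gsq u.1 + gsq u.2 = a := hadef.symm
    linear_combination (-(lam ^ 4 * (lam ^ N)⁻¹)) * hlam2 + (lam ^ 6 * (lam ^ N)⁻¹) * haG
  -- J(w) ≤ J(u)
  have hJu : Jom m₁ m₂ ω u = M + (1 / 2) * a - G := by
    unfold Jom Lfun
    rw [hMdef, hGdef, hadef]; ring
  have hJw : Jom m₁ m₂ ω w
      = lam ^ 4 * ((lam ^ N)⁻¹ * M) + lam ^ 6 * ((lam ^ N)⁻¹ * (a / 2 - G)) := by
    unfold Jom Lfun
    rw [hMw, hgw1, hgw2, hGw, hadef]; ring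
  have hJle : Jom m₁ m₂ ω w ≤ Jom m₁ m₂ ω u := by
    rw [hJu, hJw]
    rcases hN with h | h <;> subst h
    · -- N = 2
      have hd : a / 2 - G = -(M / 2) := by push_cast at hP'; linarith only [hP']
      have e1 : lam ^ 4 * ((lam ^ 2)⁻¹ * M) = lam ^ 2 * M := by
        field_simp
      have e2 : lam ^ 6 * ((lam ^ 2)⁻¹ * (a / 2 - G)) = lam ^ 4 * (a / 2 - G) := by
        field_simp
      rw [e1, e2]
      have hX : lam ^ 4 * (a / 2 - G) = -(lam ^ 4 * M / 2) := by rw [hd]; ring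
      nlinarith only [hd, hX, mul_nonneg hMpos.le (sq_nonneg (lam ^ 2 - 1))]
    · -- N = 3
      have hd : a / 2 - G = -(M / 3) := by push_cast at hP'; linarith only [hP']
      have e1 : lam ^ 4 * ((lam ^ 3)⁻¹ * M) = lam * M := by
        field_simp
      have e2 : lam ^ 6 * ((lam ^ 3)⁻¹ * (a / 2 - G)) = lam ^ 3 * (a / 2 - G) := by
        field_simp
      rw [e1, e2]
      have hX : lam ^ 3 * (a / 2 - G) = -(lam ^ 3 * M / 3) := by rw [hd]; ring
      nlinarith only [hd, hX,
        mul_nonneg (mul_nonneg hMpos.le (sq_nonneg (lam - 1)))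
          (by linarith only [hlam] : (0:ℝ) ≤ lam + 2)]
  -- conclude via the infimum characterization
  have hbdd : BddBelow {r : ℝ | ∃ w' : (Sp N → ℂ) × (Sp N → ℂ),
      Admissible w' ∧ w' ≠ 0 ∧ Kom m₁ m₂ ω w' = 0 ∧ r = Jom m₁ m₂ ω w'} := by
    refine ⟨0, ?_⟩
    rintro r ⟨w', _, _, hK', rfl⟩
    have h1 := nsq_nonneg w'.1; have h2 := nsq_nonneg w'.2
    have h3 := gsq_nonneg w'.1; have h4 := gsq_nonneg w'.2
    unfold Kom Mom at hK'
    unfold Jom Mom Lfun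
    linarith only [hK', h3, h4, mul_nonneg (le_of_lt hc1) h1, mul_nonneg (le_of_lt hc2) h2]
  have hmem : Jom m₁ m₂ ω w ∈ {r : ℝ | ∃ w' : (Sp N → ℂ) × (Sp N → ℂ),
      Admissible w' ∧ w' ≠ 0 ∧ Kom m₁ m₂ ω w' = 0 ∧ r = Jom m₁ m₂ ω w'} :=
    ⟨w, hadmw, hwne, hKw, rfl⟩
  calc Jom m₁ m₂ ω φ = _ := hφJ
    _ ≤ Jom m₁ m₂ ω w := csInf_le hbdd hmem
    _ ≤ Jom m₁ m₂ ω u := hJle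

end
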